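/- Let a < b be positive integers and y = (b, b, a). Then the set of nondecreasing invariant parking assortments for y is PA^{inv,↑}_3(y) = {(1,1,1), (1,1,1+a), (1,1,1+b), (1,1,1+a+b)}. -/

import Mathlib

open Classical in
/-- One car attempts to park on a one-way street with spots `1, …, m`: given the set
`occ` of occupied spots, the car with preference `p` and length `l` parks in spots
`j, j+1, …, j+l-1` for the least `j ≥ p` such that these spots all exist (are `≤ m`)
and are unoccupied; returns the new set of occupied spots, or `none` if parking fails. -/
noncomputable def parkOne (m : ℕ) (occ : Finset ℕ) (p l : ℕ) : Option (Finset ℕ) :=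
  if h : ∃ j, p ≤ j ∧ j + l ≤ m + 1 ∧ ∀ k ∈ Finset.Ico j (j + l), k ∉ occ then
    some (occ ∪ Finset.Ico (Nat.find h) (Nat.find h + l))
  else none

/-- Run the parking-assortment process for the cars `(preference, length)` in order. -/
noncomputable def parkList (m : ℕ) : List (ℕ × ℕ) → Finset ℕ → Option (Finset ℕ)
  | [], occ => some occ
  | c :: rest, occ => (parkOne m occ c.1 c.2).bind (parkList m rest)

/-- `x` is a parking assortment for the list of car lengths `y`. -/
def IsPA (y x : List ℕ) : Prop :=
  x.length = y.length ∧ (∀ a ∈ x, 1 ≤ a ∧ a ≤ y.sum) ∧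
    (parkList y.sum (x.zip y) ∅).isSome

/-- `PA y` is the set of parking assortments for `y`. -/
def PA (y : List ℕ) : Set (List ℕ) := {x | IsPA y x}

/-- `PAinv y` is the set of (permutation-)invariant parking assortments for `y`:
those preference lists all of whose rearrangements are parking assortments for `y`. -/
def PAinv (y : List ℕ) : Set (List ℕ) := {x | ∀ x', x'.Perm x → IsPA y x'}

/-- `y` is minimally invariant if the all-ones list is the only invariant
parking assortment for `y`. -/
def MinInv (y : List ℕ) : Prop := PAinv y = {List.replicate y.length 1}

/-!
Spot `1` must be preferred by somebody: otherwise the cars, of total length `m`, would park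
inside the `m - 1` spots `2, …, m`. So a sorted invariant assortment for `(b, b, a)` reads
`(1, x₂, x₃)`. If `2 ≤ x₂ ≤ b`, let the `b`-car preferring `x₂` go first: fewer than `b` spots
remain in front of it, and the cars preferring `1` and `x₃ ≥ x₂` cannot both fit behind it. If
`x₂ > b > a`, let both `b`-cars go first: they do not fit into the spots `x₂, …, m`. Hence
`x₂ = 1`. When the `b`-car preferring `x₃` goes first, it leaves gaps of `x₃ - 1` and
`a + b - (x₃ - 1)` spots, which the cars of lengths `b` and `a` fill exactly only if
`x₃ - 1 ∈ {0, a, b, a + b}`; for these values all three orderings of the cars do park.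
-/

open Finset

theorem Finset.Ico_disjoint_Ico_iff {α : Type*} [LinearOrder α] [LocallyFiniteOrder α]
    {a₁ a₂ b₁ b₂ : α} :
    Disjoint (Ico a₁ a₂) (Ico b₁ b₂) ↔ min a₂ b₂ ≤ max a₁ b₁ := by
  rw [← disjoint_coe, coe_Ico, coe_Ico, Set.Ico_disjoint_Ico]

theorem List.eq_or_eq_or_eq_of_perm_triple {α : Type*} {x : List α} {u w : α}
    (h : x.Perm [u, u, w]) : x = [u, u, w] ∨ x = [u, w, u] ∨ x = [w, u, u] := by
  rw [← List.mem_permutations] at h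
  simpa [List.permutations, List.permutationsAux, List.permutationsAux.rec, or_comm,
    or_left_comm] using h

section Parking

variable {m p l j : ℕ} {occ occ' : Finset ℕ}

theorem parkOne_eq_some (hpj : p ≤ j) (hm : j + l ≤ m + 1) (hfree : Disjoint (Ico j (j + l)) occ)
    (hblocked : ∀ i, p ≤ i → i < j → ¬ Disjoint (Ico i (i + l)) occ) :
    parkOne m occ p l = some (occ ∪ Ico j (j + l)) := by
  have hex : ∃ j, p ≤ j ∧ j + l ≤ m + 1 ∧ ∀ k ∈ Ico j (j + l), k ∉ occ :=
    ⟨j, hpj, hm, disjoint_left.mp hfree⟩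
  have hfind : Nat.find hex = j := by
    refine le_antisymm (Nat.find_min' hex ⟨hpj, hm, disjoint_left.mp hfree⟩) ?_
    by_contra! hlt
    obtain ⟨hp, -, hfree'⟩ := Nat.find_spec hex
    exact hblocked _ hp hlt (disjoint_left.mpr hfree')
  rw [parkOne, dif_pos hex, hfind]

theorem parkOne_eq_none
    (hblocked : ∀ j, p ≤ j → j + l ≤ m + 1 → ¬ Disjoint (Ico j (j + l)) occ) :
    parkOne m occ p l = none := by
  rw [parkOne, dif_neg]
  rintro ⟨j, hpj, hm, hfree⟩
  exact hblocked j hpj hm (disjoint_left.mpr hfree)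

theorem exists_of_parkOne_eq_some (h : parkOne m occ p l = some occ') :
    ∃ j, p ≤ j ∧ j + l ≤ m + 1 ∧ Disjoint (Ico j (j + l)) occ ∧ occ' = occ ∪ Ico j (j + l) := by
  rw [parkOne] at h
  split_ifs at h with hex
  obtain ⟨hp, hm, hfree⟩ := Nat.find_spec hex
  exact ⟨_, hp, hm, disjoint_left.mpr hfree, (Option.some.inj h).symm⟩

theorem parkList_cons_eq (rest : List (ℕ × ℕ)) (hpj : p ≤ j) (hm : j + l ≤ m + 1)
    (hfree : Disjoint (Ico j (j + l)) occ)
    (hblocked : ∀ i, p ≤ i → i < j → ¬ Disjoint (Ico i (i + l)) occ) :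
    parkList m ((p, l) :: rest) occ = parkList m rest (occ ∪ Ico j (j + l)) := by
  rw [parkList, parkOne_eq_some hpj hm hfree hblocked, Option.bind_some]

theorem parkList_cons_empty_eq (rest : List (ℕ × ℕ)) (hm : p + l ≤ m + 1) :
    parkList m ((p, l) :: rest) ∅ = parkList m rest (Ico p (p + l)) := by
  rw [parkList_cons_eq rest le_rfl hm (disjoint_empty_right _)
    fun i hpi hip => absurd hip hpi.not_gt, empty_union]

theorem parkList_cons_eq_none (rest : List (ℕ × ℕ))
    (hblocked : ∀ j, p ≤ j → j + l ≤ m + 1 → ¬ Disjoint (Ico j (j + l)) occ) :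
    parkList m ((p, l) :: rest) occ = none := by
  rw [parkList, parkOne_eq_none hblocked, Option.bind_none]

theorem parkList_eq_some_card_subset {q : ℕ} :
    ∀ {cs : List (ℕ × ℕ)} {occ occ' : Finset ℕ}, parkList m cs occ = some occ' →
      (∀ c ∈ cs, q ≤ c.1) → occ ⊆ Ico q (m + 1) →
      #occ' = #occ + (cs.map Prod.snd).sum ∧ occ' ⊆ Ico q (m + 1)
  | [], occ, occ', h, _, hsub => by
    cases h
    simpa using hsub
  | (p, l) :: rest, occ, occ', h, hq, hsub => by
    obtain ⟨occ₁, h₁, hrest⟩ := Option.bind_eq_some_iff.mp h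
    obtain ⟨j, hpj, hm, hfree, rfl⟩ := exists_of_parkOne_eq_some h₁
    have hqp : q ≤ p := hq (p, l) List.mem_cons_self
    have hsub₁ : occ ∪ Ico j (j + l) ⊆ Ico q (m + 1) :=
      union_subset hsub fun k hk => by simp only [mem_Ico] at hk ⊢; omega
    obtain ⟨hcard, hsub'⟩ :=
      parkList_eq_some_card_subset hrest (fun c hc => hq c (List.mem_cons_of_mem _ hc)) hsub₁
    refine ⟨?_, hsub'⟩
    rw [hcard, card_union_of_disjoint hfree.symm, Nat.card_Ico, List.map_cons, List.sum_cons]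
    omega

theorem one_mem_of_isPA {y x : List ℕ} (hx : IsPA y x) (hne : x ≠ []) : 1 ∈ x := by
  obtain ⟨hlen, hbounds, hparks⟩ := hx
  obtain ⟨occ', hocc'⟩ := Option.isSome_iff_exists.mp hparks
  obtain ⟨v, hv⟩ := List.exists_mem_of_ne_nil x hne
  have hm : 1 ≤ y.sum := (hbounds v hv).1.trans (hbounds v hv).2
  by_contra h1
  have hq : ∀ c ∈ x.zip y, 2 ≤ c.1 := fun c hc => by
    have hc₁ := List.of_mem_zip hc |>.1
    have hpos := (hbounds c.1 hc₁).1
    have hne1 : c.1 ≠ 1 := fun h => h1 (h ▸ hc₁)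
    omega
  obtain ⟨hcard, hsub⟩ := parkList_eq_some_card_subset hocc' hq (empty_subset _)
  have := card_le_card hsub
  rw [hcard, List.map_snd_zip hlen.ge, card_empty, Nat.card_Ico] at this
  omega

end Parking

theorem isPA_three_iff {l₁ l₂ l₃ p q r : ℕ} :
    IsPA [l₁, l₂, l₃] [p, q, r] ↔ (∀ v ∈ [p, q, r], 1 ≤ v ∧ v ≤ l₁ + l₂ + l₃) ∧
      (parkList (l₁ + l₂ + l₃) [(p, l₁), (q, l₂), (r, l₃)] ∅).isSome := by
  have hsum : [l₁, l₂, l₃].sum = l₁ + l₂ + l₃ := by simp [add_assoc]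
  simp only [IsPA, hsum, List.length_cons, true_and]
  rfl

section ThreeCars

/- Each simulation names the spot where every car lands; the remaining window tests are overlap
tests of intervals, which `Ico_disjoint_Ico_iff` turns into `min`/`max` arithmetic. -/

variable {a b c d : ℕ}

theorem parkList_one_one_isSome (ha : 0 < a) (hc : 1 ≤ c) (hcb : c ≤ b + b + 1) :
    (parkList (b + b + a) [(1, b), (1, b), (c, a)] ∅).isSome := by
  rw [parkList_cons_empty_eq, parkList_cons_eq (j := b + 1), parkList_cons_eq (j := b + b + 1)]
  all_goals first | rfl | omega |
    (intros; simp only [disjoint_union_right, Ico_disjoint_Ico_iff]; omega)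

theorem parkList_one_c_one_isSome (ha : 0 < a) (hc : 1 ≤ c ∧ c ≤ b + 1 ∨ c = 1 + a + b) :
    (parkList (b + b + a) [(1, b), (c, b), (1, a)] ∅).isSome := by
  rcases hc with hc | rfl
  · rw [parkList_cons_empty_eq, parkList_cons_eq (j := b + 1), parkList_cons_eq (j := b + b + 1)]
    all_goals first | rfl | omega |
      (intros; simp only [disjoint_union_right, Ico_disjoint_Ico_iff]; omega)
  · rw [parkList_cons_empty_eq, parkList_cons_eq (j := 1 + a + b), parkList_cons_eq (j := b + 1)]
    all_goals first | rfl | omega |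
      (intros; simp only [disjoint_union_right, Ico_disjoint_Ico_iff]; omega)

theorem parkList_c_one_one_isSome (ha : 0 < a) (hab : a < b)
    (hc : c = 1 ∨ c = 1 + a ∨ c = 1 + b ∨ c = 1 + a + b) :
    (parkList (b + b + a) [(c, b), (1, b), (1, a)] ∅).isSome := by
  rcases hc with rfl | rfl | rfl | rfl
  · exact parkList_one_one_isSome ha le_rfl (by omega)
  · rw [parkList_cons_empty_eq, parkList_cons_eq (j := 1 + a + b), parkList_cons_eq (j := 1)]
    all_goals first | rfl | omega |
      (intros; simp only [disjoint_union_right, Ico_disjoint_Ico_iff]; omega)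
  · rw [parkList_cons_empty_eq, parkList_cons_eq (j := 1), parkList_cons_eq (j := b + b + 1)]
    all_goals first | rfl | omega |
      (intros; simp only [disjoint_union_right, Ico_disjoint_Ico_iff]; omega)
  · rw [parkList_cons_empty_eq, parkList_cons_eq (j := 1), parkList_cons_eq (j := b + 1)]
    all_goals first | rfl | omega |
      (intros; simp only [disjoint_union_right, Ico_disjoint_Ico_iff]; omega)

theorem parkList_c_one_d_eq_none (hc : 2 ≤ c) (hcb : c ≤ b) (hcd : c ≤ d) :
    parkList (b + b + a) [(c, b), (1, b), (d, a)] ∅ = none := by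
  rcases le_or_gt c (a + 1) with hca | hca
  · rw [parkList_cons_empty_eq, parkList_cons_eq (j := c + b), parkList_cons_eq_none]
    all_goals first | omega |
      (intros; simp only [disjoint_union_right, Ico_disjoint_Ico_iff]; omega)
  · rw [parkList_cons_empty_eq, parkList_cons_eq_none]
    all_goals first | omega | (intros; simp only [Ico_disjoint_Ico_iff]; omega)

theorem parkList_c_d_one_eq_none (hab : a < b) (hc : b + 1 ≤ c) (hcd : c ≤ d) :
    parkList (b + b + a) [(c, b), (d, b), (1, a)] ∅ = none := by
  rcases le_or_gt c (a + b + 1) with hcab | hcab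
  · rw [parkList_cons_empty_eq, parkList_cons_eq_none]
    all_goals first | omega | (intros; simp only [Ico_disjoint_Ico_iff]; omega)
  · exact parkList_cons_eq_none _ fun j hcj hjm => by omega

theorem parkList_c_one_one_eq_none (hab : a < b) (hc : 2 ≤ c) (hca : c ≠ 1 + a)
    (hcb : c ≠ 1 + b) (hcab : c ≠ 1 + a + b) :
    parkList (b + b + a) [(c, b), (1, b), (1, a)] ∅ = none := by
  obtain hc' | hc' | hc' | hc' :
      c ≤ a ∨ a + 2 ≤ c ∧ c ≤ b ∨ b + 2 ≤ c ∧ c ≤ a + b ∨ a + b + 2 ≤ c := by omega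
  · rw [parkList_cons_empty_eq, parkList_cons_eq (j := c + b), parkList_cons_eq_none]
    all_goals first | omega |
      (intros; simp only [disjoint_union_right, Ico_disjoint_Ico_iff]; omega)
  · rw [parkList_cons_empty_eq, parkList_cons_eq_none]
    all_goals first | omega | (intros; simp only [Ico_disjoint_Ico_iff]; omega)
  · rw [parkList_cons_empty_eq, parkList_cons_eq (j := 1), parkList_cons_eq_none]
    all_goals first | omega |
      (intros; simp only [disjoint_union_right, Ico_disjoint_Ico_iff]; omega)
  · exact parkList_cons_eq_none _ fun j hcj hjm => by omega

end ThreeCars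

section PAinv

variable {a b c d : ℕ}

theorem snd_eq_one_of_mem_PAinv (hab : a < b) (hx : [1, c, d] ∈ PAinv [b, b, a])
    (hcd : c ≤ d) : c = 1 := by
  have hc : 1 ≤ c := ((isPA_three_iff.mp (hx _ (List.Perm.refl _))).1 c (by simp)).1
  by_contra hc1
  rcases le_or_gt c b with hcb | hcb
  · have := (isPA_three_iff.mp (hx [c, 1, d] (List.Perm.swap 1 c [d]))).2
    rw [parkList_c_one_d_eq_none (by omega) hcb hcd] at this
    exact Bool.false_ne_true this
  · have := (isPA_three_iff.mp (hx [c, d, 1] (List.perm_append_singleton 1 [c, d]))).2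
    rw [parkList_c_d_one_eq_none hab hcb hcd] at this
    exact Bool.false_ne_true this

theorem thd_mem_of_mem_PAinv (hab : a < b) (hx : [1, 1, c] ∈ PAinv [b, b, a]) :
    c = 1 ∨ c = 1 + a ∨ c = 1 + b ∨ c = 1 + a + b := by
  have hc : 1 ≤ c := ((isPA_three_iff.mp (hx _ (List.Perm.refl _))).1 c (by simp)).1
  by_contra! hc'
  have := (isPA_three_iff.mp (hx [c, 1, 1] (List.perm_append_singleton c [1, 1]).symm)).2
  rw [parkList_c_one_one_eq_none hab (by omega) hc'.2.1 hc'.2.2.1 hc'.2.2.2] at this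
  exact Bool.false_ne_true this

theorem one_one_mem_PAinv (ha : 0 < a) (hab : a < b)
    (hc : c = 1 ∨ c = 1 + a ∨ c = 1 + b ∨ c = 1 + a + b) : [1, 1, c] ∈ PAinv [b, b, a] := by
  intro x hx
  rcases List.eq_or_eq_or_eq_of_perm_triple hx with rfl | rfl | rfl <;> refine isPA_three_iff.mpr ?_
  · exact ⟨by simp; omega, parkList_one_one_isSome ha (by omega) (by omega)⟩
  · exact ⟨by simp; omega, parkList_one_c_one_isSome ha (by omega)⟩
  · exact ⟨by simp; omega, parkList_c_one_one_isSome ha hab hc⟩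

end PAinv

theorem stmt18 (a b : ℕ) (ha : 0 < a) (hab : a < b) :
    {x | x ∈ PAinv [b, b, a] ∧ x.Pairwise (· ≤ ·)} =
      ({[1, 1, 1], [1, 1, 1 + a], [1, 1, 1 + b], [1, 1, 1 + a + b]} : Set (List ℕ)) := by
  ext x
  constructor
  · rintro ⟨hx, hsorted⟩
    have hpa := hx x (List.Perm.refl x)
    obtain ⟨x₁, x₂, x₃, rfl⟩ := List.length_eq_three.mp hpa.1
    have h₁ : 1 ≤ x₁ := (hpa.2.1 x₁ (by simp)).1
    have hone := one_mem_of_isPA hpa (List.cons_ne_nil _ _)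
    simp only [List.pairwise_cons, List.mem_cons, List.not_mem_nil, or_false, forall_eq_or_imp,
      forall_eq, List.Pairwise.nil, false_implies, implies_true, and_true] at hsorted hone
    obtain rfl : x₁ = 1 := by omega
    obtain rfl := snd_eq_one_of_mem_PAinv hab hx hsorted.2
    simpa using thd_mem_of_mem_PAinv hab hx
  · rintro (rfl | rfl | rfl | rfl) <;>
      exact ⟨one_one_mem_PAinv ha hab (by omega), by simp [add_assoc]⟩
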